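/- arXiv:2412.03119 — 2 statements merged into one kernel-verified Lean document; each statement's English description precedes it below -/
import Mathlib

section
/- The exponential generating function of the degenerate Eulerian polynomials is (x-1)/(x - e_{-λ}((x-1)t)), i.e., (x-1)/(x - e_{-λ}((x-1)t)) = ∑_{n=0}^∞ A_{n,λ}(x) t^n/n! as formal power series in t (for appropriate x, t). -/
open Finset PowerSeries

/-- Degenerate falling factorial `(x)_{n,λ} = x(x-λ)⋯(x-(n-1)λ)`. -/
noncomputable def dfall (l x : ℝ) (n : ℕ) : ℝ := ∏ i ∈ Finset.range n, (x - i * l)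

/-- Degenerate Eulerian number `A_λ(n,k) = ∑_{i=0}^k C(n+1,i)(-1)^i (k-i+1)_{n,λ}`. -/
noncomputable def degEulerianNum (l : ℝ) (n k : ℕ) : ℝ :=
  ∑ i ∈ Finset.range (k+1), ((n+1).choose i : ℝ) * (-1)^i * dfall l ((k : ℝ) - i + 1) n

/-- Degenerate Eulerian polynomial `A_{n,λ}(x) = ∑_{k=0}^n A_λ(n,k) x^k`. -/
noncomputable def degEulerianPoly (l : ℝ) (n : ℕ) (x : ℝ) : ℝ :=
  ∑ k ∈ Finset.range (n+1), degEulerianNum l n k * x^k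

/-- Generalized binomial coefficient `binom(y,m) = y(y-1)⋯(y-m+1)/m!`. -/
noncomputable def genBinom (y : ℝ) (m : ℕ) : ℝ :=
  (∏ i ∈ Finset.range m, (y - i)) / m.factorial

/-- Degenerate exponential `e_λ^x(t) = ∑_k (x)_{k,λ} t^k/k!` as a formal power series. -/
noncomputable def degExp (l x : ℝ) : PowerSeries ℝ :=
  PowerSeries.mk fun k => dfall l x k / k.factorial

/-- Degenerate Stirling number of the second kind (explicit formula). -/
noncomputable def degStirling2 (l : ℝ) (n k : ℕ) : ℝ :=
  (-1)^k / k.factorial * ∑ j ∈ Finset.range (k+1), (-1)^j * (k.choose j : ℝ) * dfall l j n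

/-!
Write `F_n(t) = ∑_j (j+1)_{n,λ} t^j`. The coefficients of `(1-t)^{n+1} F_n` above degree `n` are
`(n+1)`-st finite differences of the degree-`n` polynomial `j ↦ (j+1)_{n,λ}`, so they vanish and
`(1-t)^{n+1} F_n = A_{n,λ}(t)`. The Vandermonde identity for degenerate falling factorials at
`x = -1` gives `t F_n = ∑_k C(n,k) (-1)_{k,λ} F_{n-k}`; multiplying by `(1-t)^{n+1}` and using
`(-1)_{k,λ} = (-1)^k (1)_{k,-λ}` yields `x A_n(x) = ∑_k C(n,k) (1)_{k,-λ} (x-1)^k A_{n-k}(x)` for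
`n ≥ 1`, which is the coefficientwise form of the claimed identity of exponential generating
functions.
-/

section DegenerateFallingFactorial

variable (l : ℝ)

theorem dfall_succ (x : ℝ) (n : ℕ) : dfall l x (n + 1) = dfall l x n * (x - n * l) :=
  prod_range_succ _ _

theorem dfall_zero_of_ne_zero {n : ℕ} (hn : n ≠ 0) : dfall l 0 n = 0 :=
  prod_eq_zero (mem_range.mpr (Nat.pos_of_ne_zero hn)) (by simp)

theorem dfall_neg_one (n : ℕ) : dfall l (-1) n = (-1) ^ n * dfall (-l) 1 n := by
  have h : ∀ i ∈ range n, (-1 : ℝ) - i * l = -1 * (1 - i * -l) := fun i _ ↦ by ring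
  rw [dfall, dfall, prod_congr rfl h, prod_mul_distrib, prod_const, card_range]

theorem dfall_add (x y : ℝ) (n : ℕ) :
    dfall l (x + y) n =
      ∑ ij ∈ antidiagonal n, (n.choose ij.1 : ℝ) * (dfall l x ij.1 * dfall l y ij.2) := by
  induction n with
  | zero => simp [dfall]
  | succ n ih =>
    rw [dfall_succ, sum_antidiagonal_choose_succ_mul (fun i j ↦ dfall l x i * dfall l y j),
      ← sum_add_distrib, ih, sum_mul]
    refine sum_congr rfl fun ij hij ↦ ?_
    rw [HasAntidiagonal.mem_antidiagonal] at hij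
    rw [Nat.choose_symm_of_eq_add hij.symm, dfall_succ, dfall_succ, ← hij]
    push_cast
    ring

noncomputable def dfallPoly (n : ℕ) : Polynomial ℝ :=
  ∏ i ∈ range n, (Polynomial.X - Polynomial.C (i * l))

theorem eval_dfallPoly (x : ℝ) (n : ℕ) : (dfallPoly l n).eval x = dfall l x n := by
  simp [dfallPoly, dfall, Polynomial.eval_prod]

theorem natDegree_dfallPoly (n : ℕ) : (dfallPoly l n).natDegree = n := by
  rw [dfallPoly, Polynomial.natDegree_prod_of_monic _ _ fun i _ ↦ Polynomial.monic_X_sub_C _]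
  simp only [Polynomial.natDegree_X_sub_C, sum_const, card_range, smul_eq_mul, mul_one]

end DegenerateFallingFactorial

section OneSubXPow

variable {R : Type*} [CommRing R]

theorem PowerSeries.coeff_one_sub_X_pow (N i : ℕ) :
    coeff i ((1 - X : R⟦X⟧) ^ N) = (-1) ^ i * (N.choose i : R) := by
  have h : (1 - X : R⟦X⟧) ^ N = rescale (-1 : R) (((1 + Polynomial.X) ^ N : Polynomial R) : R⟦X⟧) := by
    simp [rescale_X, sub_eq_add_neg]
  rw [h, coeff_rescale, Polynomial.coeff_coe, Polynomial.coeff_one_add_X_pow]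

theorem PowerSeries.coeff_add_one_sub_X_pow_mul (f : ℕ → R) (N r : ℕ) :
    coeff (N + r) ((1 - X : R⟦X⟧) ^ N * mk f) =
      ∑ k ∈ range (N + 1), (-1) ^ (N - k) * (N.choose k : R) * f (r + k) := by
  rw [sub_eq_add_neg, add_pow, sum_mul, map_sum]
  refine sum_congr rfl fun k hk ↦ ?_
  have hk : k ≤ N := Nat.lt_succ_iff.mp (mem_range.mp hk)
  have h : (1 : R⟦X⟧) ^ k * (-X) ^ (N - k) * (N.choose k : R⟦X⟧) * mk f =
      C ((-1) ^ (N - k) * (N.choose k : R)) * (X ^ (N - k) * mk f) := by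
    rw [one_pow, one_mul, neg_eq_neg_one_mul, mul_pow, map_mul, map_pow, map_neg, map_one,
      map_natCast]
    ring
  rw [h, coeff_C_mul, coeff_X_pow_mul', if_pos (by omega), coeff_mk,
    show N + r - (N - k) = r + k by omega]

theorem PowerSeries.coeff_one_sub_X_pow_mul_mk_eval_eq_zero {Q : Polynomial R} {N m : ℕ}
    (hQ : Q.natDegree < N) (hm : N ≤ m) :
    coeff m ((1 - X : R⟦X⟧) ^ N * mk fun j ↦ Q.eval (j : R)) = 0 := by
  obtain ⟨r, rfl⟩ := Nat.exists_eq_add_of_le hm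
  have h := congrFun (Polynomial.fwdDiff_iter_eq_zero_of_degree_lt hQ) r
  rw [fwdDiff_iter_eq_sum_shift] at h
  rw [Pi.zero_apply] at h
  rw [coeff_add_one_sub_X_pow_mul, ← h]
  refine sum_congr rfl fun k _ ↦ ?_
  simp [zsmul_eq_mul]

end OneSubXPow

section DegenerateEulerian

variable (l : ℝ)

noncomputable def degEulerianPolynomial (n : ℕ) : Polynomial ℝ :=
  ∑ k ∈ range (n + 1), Polynomial.C (degEulerianNum l n k) * Polynomial.X ^ k

theorem eval_degEulerianPolynomial (n : ℕ) (x : ℝ) :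
    (degEulerianPolynomial l n).eval x = degEulerianPoly l n x := by
  simp [degEulerianPolynomial, degEulerianPoly, Polynomial.eval_finsetSum]

theorem coeff_degEulerianPolynomial (n m : ℕ) :
    (degEulerianPolynomial l n).coeff m = if m ≤ n then degEulerianNum l n m else 0 := by
  simp [degEulerianPolynomial, Polynomial.coeff_X_pow]

noncomputable def dfallSeries (n : ℕ) : ℝ⟦X⟧ :=
  mk fun j ↦ dfall l (j + 1) n

theorem coe_degEulerianPolynomial (n : ℕ) :
    (degEulerianPolynomial l n : ℝ⟦X⟧) = (1 - X) ^ (n + 1) * dfallSeries l n := by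
  ext m
  rw [Polynomial.coeff_coe, coeff_degEulerianPolynomial]
  split_ifs with hm
  · rw [degEulerianNum, coeff_mul, Nat.sum_antidiagonal_eq_sum_range_succ_mk]
    refine sum_congr rfl fun i hi ↦ ?_
    have hi : i ≤ m := Nat.lt_succ_iff.mp (mem_range.mp hi)
    rw [coeff_one_sub_X_pow, dfallSeries, coeff_mk, Nat.cast_sub hi]
    ring
  · have hQ : ((dfallPoly l n).comp (Polynomial.X + Polynomial.C 1)).natDegree < n + 1 := by
      rw [Polynomial.natDegree_comp, natDegree_dfallPoly, Polynomial.natDegree_X_add_C, mul_one]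
      exact Nat.lt_succ_self n
    have hF : dfallSeries l n =
        mk fun j ↦ ((dfallPoly l n).comp (Polynomial.X + Polynomial.C 1)).eval (j : ℝ) := by
      simp [dfallSeries, eval_dfallPoly]
    rw [hF, coeff_one_sub_X_pow_mul_mk_eval_eq_zero hQ (by omega)]

theorem X_mul_dfallSeries {n : ℕ} (hn : n ≠ 0) :
    X * dfallSeries l n =
      ∑ ij ∈ antidiagonal n, C ((n.choose ij.1 : ℝ) * dfall l (-1) ij.1) * dfallSeries l ij.2 := by
  ext j
  have hLHS : coeff j (X * dfallSeries l n) = dfall l (-1 + (j + 1)) n := by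
    rw [show (-1 : ℝ) + (j + 1) = j by ring]
    cases j with
    | zero => simp [dfall_zero_of_ne_zero l hn]
    | succ j => simp [dfallSeries, coeff_succ_X_mul]
  rw [hLHS, dfall_add, map_sum]
  refine sum_congr rfl fun ij _ ↦ ?_
  rw [coeff_C_mul, dfallSeries, coeff_mk, mul_assoc]

theorem X_mul_degEulerianPolynomial {n : ℕ} (hn : n ≠ 0) :
    Polynomial.X * degEulerianPolynomial l n =
      ∑ ij ∈ antidiagonal n, Polynomial.C ((n.choose ij.1 : ℝ) * dfall (-l) 1 ij.1) *
        (Polynomial.X - 1) ^ ij.1 * degEulerianPolynomial l ij.2 := by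
  apply Polynomial.coe_injective
  simp only [← Polynomial.coeToPowerSeries.ringHom_apply, map_sum, map_mul, map_pow, map_sub,
    map_one]
  simp only [Polynomial.coeToPowerSeries.ringHom_apply, Polynomial.coe_X, Polynomial.coe_C,
    coe_degEulerianPolynomial]
  rw [mul_left_comm, X_mul_dfallSeries l hn, mul_sum]
  refine sum_congr rfl fun ij hij ↦ ?_
  rw [HasAntidiagonal.mem_antidiagonal] at hij
  have hsign : (X - 1 : ℝ⟦X⟧) ^ ij.1 = (-1) ^ ij.1 * (1 - X) ^ ij.1 := by
    rw [← mul_pow]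
    ring
  rw [dfall_neg_one, ← hij, hsign, map_mul, map_mul, map_pow, map_neg, map_one]
  ring

theorem degEulerianPoly_recurrence (x : ℝ) {n : ℕ} (hn : n ≠ 0) :
    x * degEulerianPoly l n x = ∑ ij ∈ antidiagonal n,
      (n.choose ij.1 : ℝ) * ((x - 1) ^ ij.1 * dfall (-l) 1 ij.1) * degEulerianPoly l ij.2 x := by
  have h := congrArg (Polynomial.eval x) (X_mul_degEulerianPolynomial l hn)
  simp only [Polynomial.eval_mul, Polynomial.eval_X, Polynomial.eval_finsetSum,
    Polynomial.eval_C, Polynomial.eval_pow, Polynomial.eval_sub, Polynomial.eval_one,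
    eval_degEulerianPolynomial] at h
  rw [h]
  exact sum_congr rfl fun _ _ ↦ by ring

theorem degEulerianPoly_zero (x : ℝ) : degEulerianPoly l 0 x = 1 := by
  simp [degEulerianPoly, degEulerianNum, dfall]

end DegenerateEulerian

theorem PowerSeries.coeff_mk_div_factorial_mul {K : Type*} [Field K] [CharZero K]
    (a b : ℕ → K) (n : ℕ) :
    coeff n ((mk fun i ↦ a i / i.factorial) * mk fun j ↦ b j / j.factorial) =
      (∑ ij ∈ antidiagonal n, (n.choose ij.1 : K) * a ij.1 * b ij.2) / n.factorial := by
  rw [coeff_mul, sum_div]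
  refine sum_congr rfl fun ij hij ↦ ?_
  rw [HasAntidiagonal.mem_antidiagonal] at hij
  have hfac : ((ij.1 + ij.2).factorial : K) ≠ 0 := Nat.cast_ne_zero.mpr (Nat.factorial_ne_zero _)
  rw [coeff_mk, coeff_mk, ← hij, Nat.cast_add_choose]
  field_simp

/-- `(x-1) = (x - e_{-λ}((x-1)t)) · ∑_n A_{n,λ}(x) t^n/n!` as formal
power series in `t`, i.e. the EGF of the degenerate Eulerian polynomials is
`(x-1)/(x - e_{-λ}((x-1)t))`. -/
theorem stmt1 (l x : ℝ) :
    (PowerSeries.C (x - 1)) =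
      (PowerSeries.C x - PowerSeries.rescale (x - 1) (degExp (-l) 1)) *
        PowerSeries.mk (fun n => degEulerianPoly l n x / n.factorial) := by
  have hexp : rescale (x - 1) (degExp (-l) 1) =
      mk fun i ↦ (x - 1) ^ i * dfall (-l) 1 i / i.factorial := by
    ext i
    simp [degExp, mul_div_assoc]
  ext n
  rw [coeff_C, hexp, sub_mul, map_sub, coeff_C_mul, coeff_mk_div_factorial_mul, coeff_mk]
  rcases eq_or_ne n 0 with rfl | hn
  · simp [degEulerianPoly_zero, dfall]
  · rw [if_neg hn, mul_div_assoc', degEulerianPoly_recurrence l x hn, sub_self]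
end

section
/- As a polynomial identity in x: ∑_{k=1}^{n} A_λ(n, k-1) x^k = ∑_{k=0}^{n} k! {n brace k}_λ x^k (1-x)^{n-k}, for every n ≥ 1. -/
open Finset PowerSeries

/-! Substituting `(m)_{n,λ} = ∑_j S_j j! C(m, j)` into the definition of `A_λ(n, k)` reduces the
identity, coefficientwise in `S_j`, to the power series identity
`(1 - X)^{n+1} ∑_m C(m+1, j+1) X^m = X^j (1 - X)^{n-j-1}`, which holds because
`∑_m C(j+1+m, j+1) X^m = (1 - X)^{-(j+2)}`. The `j = 0` terms vanish: `S_0 = (0)_{n,λ} = 0`. -/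

theorem dfall_one_natCast (m k : ℕ) : dfall 1 m k = k.factorial * m.choose k := by
  rw [dfall, ← Nat.cast_mul, ← Nat.descFactorial_eq_factorial_mul_choose,
    ← descPochhammer_eval_eq_descFactorial, descPochhammer_eval_eq_prod_range]
  simp

theorem dfall_zero_left (l : ℝ) {n : ℕ} (hn : n ≠ 0) : dfall l 0 n = 0 :=
  prod_eq_zero (mem_range.2 (Nat.pos_of_ne_zero hn)) (by simp)

theorem coeff_zero_eq_zero_of_dfall_eq_sum {l : ℝ} {n : ℕ} (hn : n ≠ 0) {S : ℕ → ℝ}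
    (hS : ∀ x : ℝ, dfall l x n = ∑ k ∈ range (n + 1), S k * dfall 1 x k) : S 0 = 0 := by
  have h := hS 0
  simp only [sum_range_succ', dfall_zero_left _ hn, dfall_zero_left _ (Nat.succ_ne_zero _)] at h
  simpa [dfall] using h.symm

theorem degEulerianNum_eq_sum {l : ℝ} {n : ℕ} {S : ℕ → ℝ}
    (hS : ∀ x : ℝ, dfall l x n = ∑ k ∈ range (n + 1), S k * dfall 1 x k) (k : ℕ) :
    degEulerianNum l n k = ∑ j ∈ range (n + 1), S j * j.factorial *
      ∑ i ∈ range (k + 1), (-1) ^ i * ((n + 1).choose i : ℝ) * ((k - i + 1).choose j : ℝ) := by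
  simp_rw [degEulerianNum, mul_sum]
  rw [sum_comm]
  refine sum_congr rfl fun i hi => ?_
  have hik : ((k : ℝ) - i + 1) = ((k - i + 1 : ℕ) : ℝ) := by
    push_cast [Nat.cast_sub (Nat.lt_succ_iff.1 (mem_range.1 hi))]; ring
  rw [hik, hS, mul_sum]
  refine sum_congr rfl fun j _ => ?_
  rw [dfall_one_natCast]; ring

namespace PowerSeries

variable {R : Type*} [CommRing R]

theorem coeff_one_sub_X_pow_s17 (N i : ℕ) :
    coeff i ((1 - X : R⟦X⟧) ^ N) = (-1) ^ i * N.choose i := by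
  have h : (1 - X : R⟦X⟧) ^ N = rescale (-1) (((1 + Polynomial.X) ^ N : Polynomial R) : R⟦X⟧) := by
    simp [rescale_X, sub_eq_add_neg]
  rw [h, coeff_rescale, Polynomial.coeff_coe, Polynomial.coeff_one_add_X_pow]

theorem mk_succ_choose_succ (j : ℕ) :
    (PowerSeries.mk fun m => ((m + 1).choose (j + 1) : R)) =
      X ^ j * PowerSeries.mk fun m => ((j + 1 + m).choose (j + 1) : R) := by
  ext m
  rw [coeff_mk, coeff_X_pow_mul']
  split_ifs with h
  · rw [coeff_mk]; congr 2; omega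
  · rw [Nat.choose_eq_zero_of_lt (by omega), Nat.cast_zero]

theorem one_sub_X_pow_mul_mk_succ_choose_succ (j d : ℕ) :
    (1 - X : R⟦X⟧) ^ (j + d + 1 + 1) * (PowerSeries.mk fun m => ((m + 1).choose (j + 1) : R)) =
      X ^ j * (1 - X) ^ d := by
  rw [mk_succ_choose_succ, show j + d + 1 + 1 = d + (j + 1 + 1) by ring, pow_add]
  calc (1 - X : R⟦X⟧) ^ d * (1 - X) ^ (j + 1 + 1) *
        (X ^ j * PowerSeries.mk fun m => ((j + 1 + m).choose (j + 1) : R))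
      = X ^ j * (1 - X) ^ d * ((PowerSeries.mk fun m => ((j + 1 + m).choose (j + 1) : R)) *
          (1 - X) ^ (j + 1 + 1)) := by ring
    _ = X ^ j * (1 - X) ^ d := by rw [mk_add_choose_mul_one_sub_pow_eq_one, mul_one]

end PowerSeries

theorem sum_pow_succ_mul_alternating_choose_conv {n j : ℕ} (hj : j < n) (x : ℝ) :
    ∑ k ∈ range n, x ^ (k + 1) *
        ∑ i ∈ range (k + 1), (-1) ^ i * ((n + 1).choose i : ℝ) * ((k - i + 1).choose (j + 1) : ℝ) =
      x ^ (j + 1) * (1 - x) ^ (n - (j + 1)) := by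
  obtain ⟨d, rfl⟩ : ∃ d, n = j + d + 1 := ⟨n - j - 1, by omega⟩
  set P : Polynomial ℝ := Polynomial.X ^ j * (1 - Polynomial.X) ^ d
  have hcoeff (k : ℕ) : ∑ i ∈ range (k + 1), (-1) ^ i * ((j + d + 1 + 1).choose i : ℝ) *
      ((k - i + 1).choose (j + 1) : ℝ) = P.coeff k := by
    have h := congrArg (coeff k) (one_sub_X_pow_mul_mk_succ_choose_succ (R := ℝ) j d)
    rw [coeff_mul, Nat.sum_antidiagonal_eq_sum_range_succ_mk] at h
    rw [← Polynomial.coeff_coe]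
    simpa only [coeff_one_sub_X_pow_s17, coeff_mk, P, Polynomial.coe_mul, Polynomial.coe_pow,
      Polynomial.coe_sub, Polynomial.coe_one, Polynomial.coe_X] using h
  have hdeg : P.natDegree < j + d + 1 := by
    have : P.natDegree ≤ j + d := by unfold P; compute_degree
    omega
  calc _ = x * ∑ k ∈ range (j + d + 1), P.coeff k * x ^ k := by
        simp only [hcoeff, mul_sum]; refine sum_congr rfl fun k _ => by ring
    _ = x * P.eval x := by rw [Polynomial.eval_eq_sum_range' hdeg]
    _ = _ := by
        simp only [P, Polynomial.eval_mul, Polynomial.eval_pow, Polynomial.eval_X,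
          Polynomial.eval_sub, Polynomial.eval_one, Nat.reduceSubDiff, add_tsub_cancel_left]
        ring

/-- with `S k = {n brace k}_λ` defined by `(x)_{n,λ} = ∑_{k=0}^n S k (x)_k`,
for `n ≥ 1` and all `x`:
`∑_{k=1}^n A_λ(n,k-1) x^k = ∑_{k=0}^n k! S k x^k (1-x)^{n-k}`. -/
theorem stmt17 (l : ℝ) (n : ℕ) (hn : 1 ≤ n) (S : ℕ → ℝ)
    (hS : ∀ x : ℝ, dfall l x n = ∑ k ∈ Finset.range (n + 1), S k * dfall 1 x k) :
    ∀ x : ℝ,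
      ∑ k ∈ Finset.Icc 1 n, degEulerianNum l n (k - 1) * x ^ k =
        ∑ k ∈ Finset.range (n + 1), (k.factorial : ℝ) * S k * x ^ k * (1 - x) ^ (n - k) := by
  intro x
  have hS0 : S 0 = 0 := coeff_zero_eq_zero_of_dfall_eq_sum (by omega) hS
  calc ∑ k ∈ Icc 1 n, degEulerianNum l n (k - 1) * x ^ k
      = ∑ k ∈ range n, degEulerianNum l n k * x ^ (k + 1) := by
        rw [← Ico_add_one_right_eq_Icc, sum_Ico_eq_sum_range, Nat.add_sub_cancel]
        simp only [add_comm 1, Nat.add_sub_cancel]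
    _ = ∑ j ∈ range (n + 1), S j * j.factorial * ∑ k ∈ range n, x ^ (k + 1) *
          ∑ i ∈ range (k + 1), (-1) ^ i * ((n + 1).choose i : ℝ) * ((k - i + 1).choose j : ℝ) := by
        simp only [degEulerianNum_eq_sum hS, sum_mul, mul_sum]
        rw [sum_comm]
        exact sum_congr rfl fun _ _ => sum_congr rfl fun _ _ => sum_congr rfl fun _ _ => by ring
    _ = ∑ j ∈ range n, S (j + 1) * (j + 1).factorial * (x ^ (j + 1) * (1 - x) ^ (n - (j + 1))) := by
        rw [sum_range_succ', hS0, zero_mul, zero_mul, add_zero]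
        exact sum_congr rfl fun j hj => by
          rw [sum_pow_succ_mul_alternating_choose_conv (mem_range.1 hj)]
    _ = ∑ k ∈ range (n + 1), (k.factorial : ℝ) * S k * x ^ k * (1 - x) ^ (n - k) := by
        rw [sum_range_succ' _ n, hS0, mul_zero, zero_mul, zero_mul, add_zero]
        exact sum_congr rfl fun _ _ => by ring
end
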